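/- Let A be a binary m×n matrix and v, v' two distinct vertices of Q*(A). If the joint saturation graph G(v,v') is partite-connected (i.e., one of its two partite sets is entirely contained in a single connected component), then v and v' are adjacent in Q*(A). -/

import Mathlib

open Finset

/-- Support of a vector. -/
def supp {n : ℕ} (x : Fin n → ℝ) : Set (Fin n) := {j | x j ≠ 0}

/-- Support of the `t`-th row of a matrix. -/
def rowSupp {m n : ℕ} (A : Matrix (Fin m) (Fin n) ℝ) (t : Fin m) : Set (Fin n) :=
  {j | A t j ≠ 0}

def IsBinaryMatrix {m n : ℕ} (A : Matrix (Fin m) (Fin n) ℝ) : Prop :=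
  ∀ t j, A t j = 0 ∨ A t j = 1

def IsBinaryVec {n : ℕ} (x : Fin n → ℝ) : Prop := ∀ j, x j = 0 ∨ x j = 1

/-- The polyhedron `{x | A x ≥ b, x ≥ 0}`. -/
def polyP {m n : ℕ} (A : Matrix (Fin m) (Fin n) ℝ) (b : Fin m → ℝ) : Set (Fin n → ℝ) :=
  {x | (∀ i, b i ≤ ∑ j, A i j * x j) ∧ ∀ j, 0 ≤ x j}

/-- The linear relaxation `Q(A) = {x | A x ≥ 1, x ≥ 0}`. -/
def polyQ {m n : ℕ} (A : Matrix (Fin m) (Fin n) ℝ) : Set (Fin n → ℝ) :=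
  {x | (∀ i, 1 ≤ ∑ j, A i j * x j) ∧ ∀ j, 0 ≤ x j}

/-- The set covering polyhedron `Q*(A)`: convex hull of nonnegative integer solutions of
`A x ≥ 1`. -/
def Qstar {m n : ℕ} (A : Matrix (Fin m) (Fin n) ℝ) : Set (Fin n → ℝ) :=
  convexHull ℝ {x | (∀ j, ∃ k : ℕ, x j = k) ∧ ∀ i, 1 ≤ ∑ j, A i j * x j}

/-- A vertex of a convex set is an extreme point. -/
def IsVertex {n : ℕ} (S : Set (Fin n → ℝ)) (v : Fin n → ℝ) : Prop :=
  v ∈ S.extremePoints ℝ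

/-- Two distinct vertices are adjacent when they lie on a common edge, i.e. the segment
joining them is a face (extreme subset) of `S`. -/
def AdjacentVerts {n : ℕ} (S : Set (Fin n → ℝ)) (v w : Fin n → ℝ) : Prop :=
  v ≠ w ∧ IsVertex S v ∧ IsVertex S w ∧ IsExtreme ℝ S (segment ℝ v w)

/-- There is a row support `C` with `C ∩ supp v = {p}` and `C ∩ supp v' = {p'}`. -/
def jsgEdge {m n : ℕ} (A : Matrix (Fin m) (Fin n) ℝ) (v v' : Fin n → ℝ)
    (p p' : Fin n) : Prop :=
  ∃ t, rowSupp A t ∩ supp v = {p} ∧ rowSupp A t ∩ supp v' = {p'}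

/-- The joint saturation graph of `v` and `v'` with respect to `A`. -/
def JSG {m n : ℕ} (A : Matrix (Fin m) (Fin n) ℝ) (v v' : Fin n → ℝ) :
    SimpleGraph (Fin n) where
  Adj p p' := p ≠ p' ∧ (jsgEdge A v v' p p' ∨ jsgEdge A v v' p' p)
  symm := by constructor; intro p p' h; exact ⟨h.1.symm, h.2.symm⟩
  loopless := by constructor; intro p h; exact h.1 rfl

/-- The node set of the joint saturation graph: the symmetric difference of the supports. -/
def jsgNodes {n : ℕ} (v v' : Fin n → ℝ) : Set (Fin n) :=
  (supp v \ supp v') ∪ (supp v' \ supp v)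

def JSGConnected {m n : ℕ} (A : Matrix (Fin m) (Fin n) ℝ) (v v' : Fin n → ℝ) : Prop :=
  ∀ p ∈ jsgNodes v v', ∀ q ∈ jsgNodes v v', (JSG A v v').Reachable p q

/-- One of the two partite sets is contained in a single connected component. -/
def JSGPartiteConnected {m n : ℕ} (A : Matrix (Fin m) (Fin n) ℝ) (v v' : Fin n → ℝ) : Prop :=
  (∀ p ∈ supp v \ supp v', ∀ q ∈ supp v \ supp v', (JSG A v v').Reachable p q) ∨
  (∀ p ∈ supp v' \ supp v, ∀ q ∈ supp v' \ supp v, (JSG A v v').Reachable p q)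

/-- Exactly two components, one of which is an isolated node. -/
def JSGAlmostConnected {m n : ℕ} (A : Matrix (Fin m) (Fin n) ℝ) (v v' : Fin n → ℝ) : Prop :=
  ∃ q ∈ jsgNodes v v', (∀ p, ¬ (JSG A v v').Adj q p) ∧ (jsgNodes v v' \ {q}).Nonempty ∧
    ∀ p ∈ jsgNodes v v' \ {q}, ∀ r ∈ jsgNodes v v' \ {q}, (JSG A v v').Reachable p r

/-- The (directed) circular arc from `i` to `j` in `Fin n`. -/
def arc {n : ℕ} [NeZero n] (i j : Fin n) : Set (Fin n) :=
  {k | ∃ h : ℕ, h ≤ ((j - i : Fin n) : ℕ) ∧ k = i + (Fin.ofNat n h)}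

/-- A matrix is row circular if each row support is a circular arc. -/
def RowCircular {m n : ℕ} [NeZero n] (A : Matrix (Fin m) (Fin n) ℝ) : Prop :=
  ∀ t, ∃ i j : Fin n, rowSupp A t = arc i j

/-- The standard assumptions: binary, no dominating rows, between 2 and n-1 ones per row,
no all-zero or all-one column. -/
def StandardAssumptions {m n : ℕ} (A : Matrix (Fin m) (Fin n) ℝ) : Prop :=
  IsBinaryMatrix A ∧
  (∀ s t : Fin m, s ≠ t → ¬ rowSupp A s ⊆ rowSupp A t) ∧
  (∀ t, 2 ≤ (rowSupp A t).ncard ∧ (rowSupp A t).ncard ≤ n - 1) ∧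
  (∀ j : Fin n, (∃ t, A t j ≠ 0) ∧ (∃ t, A t j = 0))

/-- `a` and `b` occur consecutively (in either order) in the list `l`. -/
def ListConsec {α : Type*} (l : List α) (a b : α) : Prop :=
  ∃ k : ℕ, (l[k]? = some a ∧ l[k+1]? = some b) ∨ (l[k]? = some b ∧ l[k+1]? = some a)

/-- `a` and `b` occur cyclically consecutively (in either order) in the list `l`. -/
def CycConsec {α : Type*} (l : List α) (a b : α) : Prop :=
  ∃ k : ℕ, k < l.length ∧
    ((l[k]? = some a ∧ l[(k+1) % l.length]? = some b) ∨
     (l[k]? = some b ∧ l[(k+1) % l.length]? = some a))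

/-- The set `S` induces a path (possibly a single node) in `G`. -/
def IsPathOn {n : ℕ} (G : SimpleGraph (Fin n)) (S : Set (Fin n)) : Prop :=
  ∃ l : List (Fin n), l.Nodup ∧ (∀ x, x ∈ S ↔ x ∈ l) ∧
    (∀ a b, a ∈ S → G.Adj a b → ListConsec l a b) ∧
    (∀ a b, ListConsec l a b → G.Adj a b)

/-- The set `S` induces a cycle in `G`. -/
def IsCycleOn {n : ℕ} (G : SimpleGraph (Fin n)) (S : Set (Fin n)) : Prop :=
  ∃ l : List (Fin n), 3 ≤ l.length ∧ l.Nodup ∧ (∀ x, x ∈ S ↔ x ∈ l) ∧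
    (∀ a b, a ∈ S → G.Adj a b → CycConsec l a b) ∧
    (∀ a b, CycConsec l a b → G.Adj a b)

/-- `p` and `q` are cyclically consecutive elements of `S`. -/
def CyclConsecIn {n : ℕ} [NeZero n] (S : Set (Fin n)) (p q : Fin n) : Prop :=
  p ≠ q ∧ p ∈ S ∧ q ∈ S ∧ (arc p q ∩ S = {p, q} ∨ arc q p ∩ S = {p, q})

/-- The circulant matrix `C(n,2)` with row supports `{t, t+1}` (mod n). -/
def Cn2 (n : ℕ) [NeZero n] : Matrix (Fin n) (Fin n) ℝ :=
  fun t j => if j = t ∨ j = t + 1 then 1 else 0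

/-- Append a row to a matrix. -/
def appendRow {m n : ℕ} (A : Matrix (Fin m) (Fin n) ℝ) (a : Fin n → ℝ) :
    Matrix (Fin (m+1)) (Fin n) ℝ :=
  fun t j => if h : (t : ℕ) < m then A ⟨t, h⟩ j else a j

/-- A set of points is integral if all its extreme points are integer vectors. -/
def IsIntegralSet {n : ℕ} (S : Set (Fin n → ℝ)) : Prop :=
  ∀ x ∈ S.extremePoints ℝ, ∀ j, ∃ z : ℤ, x j = z

/-- A binary matrix is minimally nonideal if `Q(A)` is not integral but both restrictions
`Q(A) ∩ {x_i = 0}` and `Q(A) ∩ {x_i = 1}` are integral for every coordinate `i`. -/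
def MinimallyNonideal {m n : ℕ} (A : Matrix (Fin m) (Fin n) ℝ) : Prop :=
  ¬ IsIntegralSet (polyQ A) ∧
  ∀ i : Fin n, IsIntegralSet (polyQ A ∩ {x | x i = 0}) ∧
               IsIntegralSet (polyQ A ∩ {x | x i = 1})

/-- The matrix of the degenerate projective plane with `t+1` points and lines. -/
def Jmat (t : ℕ) : Matrix (Fin (t+1)) (Fin (t+1)) ℝ :=
  fun i j => if i = 0 then (if j = 0 then 0 else 1) else (if j = 0 ∨ j = i then 1 else 0)

/-- `A` is isomorphic to some degenerate projective plane matrix `J_t`, `t ≥ 2`. -/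
def IsoToDegenProjPlane {m n : ℕ} (A : Matrix (Fin m) (Fin n) ℝ) : Prop :=
  ∃ t : ℕ, 2 ≤ t ∧ ∃ (σ : Fin m ≃ Fin (t+1)) (τ : Fin n ≃ Fin (t+1)),
    ∀ i j, A i j = Jmat t (σ i) (τ j)

/-- `A₁` is the core of `A`: a square nonsingular row submatrix with `r` ones per row and
per column, all other rows of `A` having more than `r` ones. -/
def IsCore {m n : ℕ} (A : Matrix (Fin m) (Fin n) ℝ) (A₁ : Matrix (Fin n) (Fin n) ℝ)
    (r : ℕ) : Prop :=
  2 ≤ r ∧ A₁.det ≠ 0 ∧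
  (∃ f : Fin n → Fin m, Function.Injective f ∧ (∀ i, A₁ i = A (f i)) ∧
    ∀ t, t ∉ Set.range f → r < (rowSupp A t).ncard) ∧
  (∀ i, (rowSupp A₁ i).ncard = r) ∧ (∀ j, {i | A₁ i j ≠ 0}.ncard = r)

/-- `B₁` is the core of the blocker of `A`: a square nonsingular matrix whose rows are
binary vertices of `Q*(A)` with `s` ones per row and per column, all other binary
vertices of `Q*(A)` having more than `s` ones. -/
def IsBlockerCore {m n : ℕ} (A : Matrix (Fin m) (Fin n) ℝ) (B₁ : Matrix (Fin n) (Fin n) ℝ)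
    (s : ℕ) : Prop :=
  2 ≤ s ∧ B₁.det ≠ 0 ∧
  (∀ i, IsBinaryVec (B₁ i) ∧ IsVertex (Qstar A) (B₁ i)) ∧
  Function.Injective (fun i => B₁ i) ∧
  (∀ i, (rowSupp B₁ i).ncard = s) ∧ (∀ j, {i | B₁ i j ≠ 0}.ncard = s) ∧
  (∀ x, IsBinaryVec x → IsVertex (Qstar A) x → (∀ i, x ≠ B₁ i) → s < (supp x).ncard)

/-- `w^i` for `n = 3ν`: the complement of the characteristic vector of the residue class
`i` mod 3. -/
def wVec (n : ℕ) (i : Fin 3) : Fin n → ℝ :=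
  fun k => if (k : ℕ) % 3 = (i : ℕ) then 0 else 1

/-- `a^i` for `n = 3ν`: the characteristic vector of the residue class `i` mod 3
(`a¹ = (1,0,0,1,0,0,…)` corresponds to `i = 0`). -/
def aVec (n : ℕ) (i : ℕ) : Fin n → ℝ :=
  fun k => if (k : ℕ) % 3 = i then 1 else 0


/-!
`Q*(A)` is the convex hull of the set `D` of nonnegative integer points covering every row, so the
segment `[v, v']` is a face as soon as every point `u ∈ D` occurring with positive weight in a
convex combination that lands on the line through `v` and `v'` is `v` or `v'`. Such a `u` is tight
wherever both `v` and `v'` are, so `u x + u y = 1` along every edge of the joint saturation graph,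
and along a path `u` alternates between `0` and `1`: partite-connectedness makes `u` either zero or
at least one on all of `supp v ∖ supp v'`. A binary vertex has, for each point of its support, a
row meeting the support only there (otherwise that coordinate could be lowered); these rows give
lower bounds for `u` on the remaining coordinates, and averaging against the weights turns every
bound into an equality, which forces `u = v` or `u = v'`.
-/

theorem eq_of_forall_le_of_sum_mul_le {ι : Type*} {s : Finset ι} {w f : ι → ℝ} {c : ℝ}
    (hw : ∀ i ∈ s, 0 < w i) (hw1 : ∑ i ∈ s, w i = 1) (hf : ∀ i ∈ s, c ≤ f i)
    (h : ∑ i ∈ s, w i * f i ≤ c) : ∀ i ∈ s, f i = c := by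
  have hnonneg : ∀ i ∈ s, 0 ≤ w i * (f i - c) :=
    fun i hi => mul_nonneg (hw i hi).le (sub_nonneg.mpr (hf i hi))
  have hzero : ∑ i ∈ s, w i * (f i - c) = 0 := by
    refine le_antisymm ?_ (Finset.sum_nonneg hnonneg)
    simp only [mul_sub, Finset.sum_sub_distrib, ← Finset.sum_mul, hw1, one_mul]
    linarith
  intro i hi
  have := (Finset.sum_eq_zero_iff_of_nonneg hnonneg).mp hzero i hi
  linarith [(mul_eq_zero.mp this).resolve_left (hw i hi).ne']

theorem isExtreme_convexHull_of_forall_sum_mem {𝕜 E : Type*} [Field 𝕜] [LinearOrder 𝕜]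
    [IsStrictOrderedRing 𝕜] [AddCommGroup E] [Module 𝕜 E] {D F : Set E} (hFD : F ⊆ D)
    (h : ∀ (t : Finset E) (w : E → 𝕜), ↑t ⊆ D → (∀ y ∈ t, 0 < w y) → ∑ y ∈ t, w y = 1 →
      ∑ y ∈ t, w y • y ∈ convexHull 𝕜 F → ↑t ⊆ F) :
    IsExtreme 𝕜 (convexHull 𝕜 D) (convexHull 𝕜 F) := by
  classical
  refine ⟨convexHull_mono hFD, fun x₁ hx₁ x₂ hx₂ x hxF hx => ?_⟩
  simp only [convexHull_eq_union_convexHull_finite_subsets D, Set.mem_iUnion] at hx₁ hx₂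
  obtain ⟨t₁, ht₁D, hx₁⟩ := hx₁
  obtain ⟨t₂, ht₂D, hx₂⟩ := hx₂
  obtain ⟨w₁, hw₁0, hw₁1, rfl⟩ :=
    Finset.mem_convexHull'.mp (convexHull_mono (Finset.subset_union_left (s₂ := t₂)) hx₁)
  obtain ⟨w₂, hw₂0, hw₂1, rfl⟩ :=
    Finset.mem_convexHull'.mp (convexHull_mono (Finset.subset_union_right (s₁ := t₁)) hx₂)
  obtain ⟨a, b, ha, hb, hab, rfl⟩ := hx
  set t := t₁ ∪ t₂
  have htD : ↑t ⊆ D := by rw [Finset.coe_union]; exact Set.union_subset ht₁D ht₂D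
  set W : E → 𝕜 := fun y => a * w₁ y + b * w₂ y
  have hW_pos : ∀ y ∈ t, W y ≠ 0 → 0 < W y := fun y hy hne =>
    (add_nonneg (mul_nonneg ha.le (hw₁0 y hy)) (mul_nonneg hb.le (hw₂0 y hy))).lt_of_ne' hne
  have hw₁_pos : ∀ y ∈ t, w₁ y ≠ 0 → 0 < W y := fun y hy hne =>
    add_pos_of_pos_of_nonneg (mul_pos ha ((hw₁0 y hy).lt_of_ne' hne))
      (mul_nonneg hb.le (hw₂0 y hy))
  have hsF : ↑(t.filter fun y => 0 < W y) ⊆ F := by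
    refine h _ W (fun y hy => htD (Finset.mem_filter.mp hy).1)
      (fun y hy => (Finset.mem_filter.mp hy).2) ?_ ?_
    · rw [Finset.sum_filter_of_ne hW_pos]
      simp only [W, Finset.sum_add_distrib, ← Finset.mul_sum, hw₁1, hw₂1, hab, mul_one]
    · rw [Finset.sum_filter_of_ne fun y hy hne => hW_pos y hy fun h0 => hne (by rw [h0, zero_smul])]
      convert hxF using 1
      simp only [W, add_smul, mul_smul, Finset.sum_add_distrib, ← Finset.smul_sum]
  rw [← Finset.sum_filter_of_ne fun y hy hne => hw₁_pos y hy fun h0 => hne (by rw [h0, zero_smul])]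
  refine (convex_convexHull 𝕜 F).sum_mem (fun y hy => hw₁0 y (Finset.mem_of_mem_filter y hy))
    ?_ fun y hy => subset_convexHull 𝕜 F (hsF hy)
  rw [Finset.sum_filter_of_ne fun y hy hne => hw₁_pos y hy hne, hw₁1]

theorem SimpleGraph.Reachable.one_le_of_add_eq_one {V : Type*} {G : SimpleGraph V} {P : Set V}
    {u : V → ℝ} (hu : ∀ x, 0 ≤ u x) (hG : ∀ x y, G.Adj x y → u x + u y = 1 ∧ (x ∈ P ↔ y ∉ P))
    {p q : V} (hpq : G.Reachable p q) (hp : p ∈ P) (hup : 1 ≤ u p) (hq : q ∈ P) : 1 ≤ u q := by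
  suffices ∀ y, Relation.ReflTransGen G.Adj p y → (y ∈ P → 1 ≤ u y) ∧ (y ∉ P → u y = 0) from
    (this q ((SimpleGraph.reachable_iff_reflTransGen p q).mp hpq)).1 hq
  intro y hy
  induction hy with
  | refl => exact ⟨fun _ => hup, fun h => absurd hp h⟩
  | @tail x y _ hxy ih =>
    obtain ⟨hsum, hP⟩ := hG x y hxy
    by_cases hy : y ∈ P
    · exact ⟨fun _ => by linarith [ih.2 (hP.not_left.mpr hy)], fun h => absurd hy h⟩
    · exact ⟨fun h => absurd h hy, fun _ => by linarith [ih.1 (hP.mpr hy), hu y]⟩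

section CoverPoints

variable {m n : ℕ} {A : Matrix (Fin m) (Fin n) ℝ}

def coverPoints (A : Matrix (Fin m) (Fin n) ℝ) : Set (Fin n → ℝ) :=
  {x | (∀ j, ∃ k : ℕ, x j = k) ∧ ∀ i, 1 ≤ ∑ j, A i j * x j}

theorem nonneg_of_mem_coverPoints {x : Fin n → ℝ} (hx : x ∈ coverPoints A) (j : Fin n) :
    0 ≤ x j := by
  obtain ⟨k, hk⟩ := hx.1 j
  rw [hk]
  positivity

theorem one_le_of_mem_coverPoints {x : Fin n → ℝ} (hx : x ∈ coverPoints A) {j : Fin n}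
    (hj : x j ≠ 0) : 1 ≤ x j := by
  obtain ⟨k, hk⟩ := hx.1 j
  rw [hk] at hj ⊢
  exact Nat.one_le_cast.mpr (Nat.one_le_iff_ne_zero.mpr (by exact_mod_cast hj))

theorem IsBinaryMatrix.nonneg (hA : IsBinaryMatrix A) (i : Fin m) (j : Fin n) : 0 ≤ A i j := by
  rcases hA i j with h | h <;> simp [h]

theorem IsBinaryMatrix.eq_one (hA : IsBinaryMatrix A) {i : Fin m} {j : Fin n} (h : A i j ≠ 0) :
    A i j = 1 :=
  (hA i j).resolve_left h

theorem IsBinaryVec.eq_one {x : Fin n → ℝ} (hx : IsBinaryVec x) {j : Fin n} (h : x j ≠ 0) :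
    x j = 1 :=
  (hx j).resolve_left h

theorem IsBinaryVec.nonneg {x : Fin n → ℝ} (hx : IsBinaryVec x) (j : Fin n) : 0 ≤ x j := by
  rcases hx j with h | h <;> simp [h]

theorem mem_coverPoints_of_le (hA : IsBinaryMatrix A) {x y : Fin n → ℝ} (hx : x ∈ coverPoints A)
    (hy : ∀ j, ∃ k : ℕ, y j = k) (hxy : x ≤ y) : y ∈ coverPoints A :=
  ⟨hy, fun i => (hx.2 i).trans <| Finset.sum_le_sum fun j _ =>
    mul_le_mul_of_nonneg_left (hxy j) (hA.nonneg i j)⟩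

theorem rowSum_sub_single (x : Fin n → ℝ) (i : Fin m) (j : Fin n) :
    ∑ l, A i l * (x - Pi.single j 1 : Fin n → ℝ) l = ∑ l, A i l * x l - A i j := by
  simp [mul_sub, Finset.sum_sub_distrib, Pi.single_apply]

theorem IsVertex.mem_coverPoints {v : Fin n → ℝ} (hv : IsVertex (Qstar A) v) :
    v ∈ coverPoints A :=
  extremePoints_convexHull_subset hv

theorem IsVertex.sub_single_notMem (hA : IsBinaryMatrix A) {v : Fin n → ℝ}
    (hv : IsVertex (Qstar A) v) (j : Fin n) : v - Pi.single j 1 ∉ coverPoints A := by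
  intro hsub
  have hadd : v + Pi.single j 1 ∈ coverPoints A := by
    refine mem_coverPoints_of_le hA hv.mem_coverPoints (fun l => ?_) fun l => ?_
    · obtain ⟨k, hk⟩ := hv.mem_coverPoints.1 l
      by_cases hl : l = j
      · subst hl; exact ⟨k + 1, by simp [hk]⟩
      · exact ⟨k, by simp [hl, hk]⟩
    · by_cases hl : l = j <;> simp [hl]
  have hmid : v ∈ openSegment ℝ (v - Pi.single j 1) (v + Pi.single j 1) :=
    ⟨1 / 2, 1 / 2, by norm_num, by norm_num, by norm_num, by module⟩
  have h := congrFun ((mem_extremePoints.mp hv).2 _ (subset_convexHull ℝ _ hsub) _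
    (subset_convexHull ℝ _ hadd) hmid).1 j
  simp at h

theorem sub_single_mem_coverPoints (hA : IsBinaryMatrix A) {x : Fin n → ℝ}
    (hx : x ∈ coverPoints A) {j : Fin n} (hj : x j ≠ 0)
    (hrow : ∀ i, A i j ≠ 0 → 2 ≤ ∑ l, A i l * x l) : x - Pi.single j 1 ∈ coverPoints A := by
  refine ⟨fun l => ?_, fun i => ?_⟩
  · obtain ⟨k, hk⟩ := hx.1 l
    by_cases hl : l = j
    · subst hl
      obtain ⟨k', rfl⟩ := Nat.exists_eq_succ_of_ne_zero (n := k) (by rintro rfl; simp_all)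
      exact ⟨k', by simp [hk]⟩
    · exact ⟨k, by simp [hl, hk]⟩
  · rw [rowSum_sub_single]
    by_cases hij : A i j = 0
    · rw [hij, sub_zero]
      exact hx.2 i
    · linarith [hrow i hij, hA.eq_one hij]

theorem IsVertex.exists_rowSum_lt_two (hA : IsBinaryMatrix A) {v : Fin n → ℝ}
    (hv : IsVertex (Qstar A) v) {j : Fin n} (hj : v j ≠ 0) :
    ∃ i, A i j ≠ 0 ∧ ∑ l, A i l * v l < 2 := by
  by_contra! h
  exact hv.sub_single_notMem hA j (sub_single_mem_coverPoints hA hv.mem_coverPoints hj h)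

theorem IsVertex.isBinaryVec (hA : IsBinaryMatrix A) {v : Fin n → ℝ}
    (hv : IsVertex (Qstar A) v) : IsBinaryVec v := by
  intro j
  obtain ⟨k, hk⟩ := hv.mem_coverPoints.1 j
  rcases Nat.lt_or_ge k 2 with hk2 | hk2
  · interval_cases k <;> simp [hk]
  obtain ⟨i, hij, hi⟩ := hv.exists_rowSum_lt_two hA (j := j) (by rw [hk]; positivity)
  have hle := Finset.single_le_sum (fun l _ =>
    mul_nonneg (hA.nonneg i l) (nonneg_of_mem_coverPoints hv.mem_coverPoints l)) (Finset.mem_univ j)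
  rw [hA.eq_one hij, one_mul, hk] at hle
  have : (2 : ℝ) ≤ k := by exact_mod_cast hk2
  linarith

theorem IsVertex.exists_rowSupp_inter_supp_eq_singleton (hA : IsBinaryMatrix A)
    {v : Fin n → ℝ} (hv : IsVertex (Qstar A) v) {p : Fin n} (hp : p ∈ supp v) :
    ∃ t, rowSupp A t ∩ supp v = {p} := by
  obtain ⟨t, htp, ht⟩ := hv.exists_rowSum_lt_two hA hp
  refine ⟨t, Set.eq_singleton_iff_unique_mem.mpr ⟨⟨htp, hp⟩, fun q hq => ?_⟩⟩
  by_contra hqp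
  have hle := Finset.sum_le_sum_of_subset_of_nonneg (Finset.subset_univ {q, p}) fun l _ _ =>
    mul_nonneg (hA.nonneg t l) (nonneg_of_mem_coverPoints hv.mem_coverPoints l)
  rw [Finset.sum_pair hqp, hA.eq_one hq.1, hA.eq_one htp] at hle
  linarith [one_le_of_mem_coverPoints hv.mem_coverPoints hq.2,
    one_le_of_mem_coverPoints hv.mem_coverPoints hp]

theorem IsVertex.not_supp_subset (hA : IsBinaryMatrix A) {v v' : Fin n → ℝ}
    (hv : IsVertex (Qstar A) v) (hv' : IsVertex (Qstar A) v') (hne : v ≠ v') :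
    ¬ supp v ⊆ supp v' := by
  intro hsub
  have hbv := hv.isBinaryVec hA
  have hbv' := hv'.isBinaryVec hA
  have hle : v ≤ v' := fun l => by
    rcases hbv l with h | h
    · rw [h]; exact hbv'.nonneg l
    · rw [h, hbv'.eq_one (hsub (show v l ≠ 0 by simp [h]))]
  obtain ⟨j, hj⟩ := Function.ne_iff.mp hne
  have hvj : v j = 0 := (hbv j).resolve_right fun h =>
    hj (by rw [h, hbv'.eq_one (hsub (show v j ≠ 0 by simp [h]))])
  have hv'j : v' j = 1 := (hbv' j).resolve_left fun h => hj (by rw [hvj, h])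
  refine hv'.sub_single_notMem hA j (mem_coverPoints_of_le hA hv.mem_coverPoints
    (fun l => ?_) fun l => ?_)
  · by_cases hl : l = j
    · exact ⟨0, by simp [hl, hv'j]⟩
    · rcases hbv' l with h | h
      · exact ⟨0, by simp [hl, h]⟩
      · exact ⟨1, by simp [hl, h]⟩
  · by_cases hl : l = j
    · subst hl; simp [hvj, hv'j]
    · simpa [hl] using hle l

end CoverPoints

section JointSaturation

variable {m n : ℕ} {A : Matrix (Fin m) (Fin n) ℝ} {v v' u : Fin n → ℝ}

theorem jsgEdge_comm {x y : Fin n} : jsgEdge A v' v x y ↔ jsgEdge A v v' y x :=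
  exists_congr fun _ => and_comm

theorem JSG_comm (A : Matrix (Fin m) (Fin n) ℝ) (v v' : Fin n → ℝ) :
    JSG A v' v = JSG A v v' := by
  ext x y
  simp only [JSG, jsgEdge_comm]
  tauto

theorem jsgNodes_comm (v v' : Fin n → ℝ) : jsgNodes v' v = jsgNodes v v' :=
  Set.union_comm _ _

theorem jsgEdge.mem_diff {x y : Fin n} (h : jsgEdge A v v' x y) (hxy : x ≠ y) :
    x ∈ supp v \ supp v' ∧ y ∈ supp v' \ supp v := by
  obtain ⟨t, hx, hy⟩ := h
  have hxt : x ∈ rowSupp A t ∩ supp v := hx ▸ rfl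
  have hyt : y ∈ rowSupp A t ∩ supp v' := hy ▸ rfl
  exact ⟨⟨hxt.2, fun hx' => hxy (hy.subset ⟨hxt.1, hx'⟩)⟩,
    ⟨hyt.2, fun hy' => hxy (hx.subset ⟨hyt.1, hy'⟩).symm⟩⟩

theorem rowSum_eq_sum (hA : IsBinaryMatrix A) {t : Fin m} {s : Finset (Fin n)}
    (hs : ∀ j ∈ s, A t j ≠ 0) (hout : ∀ j ∉ s, A t j ≠ 0 → u j = 0) :
    ∑ j, A t j * u j = ∑ j ∈ s, u j := by
  rw [← Finset.sum_subset (Finset.subset_univ s) fun j _ hj => ?_]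
  · exact Finset.sum_congr rfl fun j hj => by rw [hA.eq_one (hs j hj), one_mul]
  · by_cases htj : A t j = 0
    · rw [htj, zero_mul]
    · rw [hout j hj htj, mul_zero]

theorem rowSum_eq_of_rowSupp_inter_eq_singleton (hA : IsBinaryMatrix A) {S : Set (Fin n)}
    (hS : ∀ j, u j ≠ 0 → j ∈ S) {t : Fin m} {q : Fin n} (ht : rowSupp A t ∩ S = {q}) :
    ∑ j, A t j * u j = u q := by
  rw [rowSum_eq_sum hA (s := {q}) (fun j hj => ?_) fun j hj htj => ?_, Finset.sum_singleton]
  · rw [Finset.mem_singleton.mp hj]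
    exact (ht.symm ▸ rfl : q ∈ rowSupp A t ∩ S).1
  · by_contra hu
    exact hj (Finset.mem_singleton.mpr (ht.subset ⟨htj, hS j hu⟩))

theorem IsBinaryVec.rowSum_eq_one (hA : IsBinaryMatrix A) (hv : IsBinaryVec v) {t : Fin m}
    {a : Fin n} (ha : rowSupp A t ∩ supp v = {a}) : ∑ j, A t j * v j = 1 := by
  rw [rowSum_eq_of_rowSupp_inter_eq_singleton hA (fun j hj => hj) ha,
    hv.eq_one (ha ▸ rfl : a ∈ rowSupp A t ∩ supp v).2]

/-- `u` satisfies with equality every constraint of `Q(A)` that is tight at both binary points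
`v` and `v'`: nonnegativity off `supp v ∪ supp v'`, and the rows meeting each support once. -/
def JointlyTight (A : Matrix (Fin m) (Fin n) ℝ) (v v' u : Fin n → ℝ) : Prop :=
  (∀ j, u j ≠ 0 → j ∈ supp v ∪ supp v') ∧
    ∀ t a b, rowSupp A t ∩ supp v = {a} → rowSupp A t ∩ supp v' = {b} → ∑ j, A t j * u j = 1

theorem JointlyTight.symm (hu : JointlyTight A v v' u) : JointlyTight A v' v u :=
  ⟨fun j hj => Set.union_comm (supp v) (supp v') ▸ hu.1 j hj,
    fun t a b ha hb => hu.2 t b a hb ha⟩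

theorem JointlyTight.add_eq_one_of_jsgEdge (hA : IsBinaryMatrix A) (hu : JointlyTight A v v' u)
    {x y : Fin n} (hxy : x ≠ y) (h : jsgEdge A v v' x y) : u x + u y = 1 := by
  obtain ⟨t, hx, hy⟩ := h
  rw [← hu.2 t x y hx hy, rowSum_eq_sum hA (s := {x, y}) (fun j hj => ?_) fun j hj htj => ?_,
    Finset.sum_pair hxy]
  · rcases Finset.mem_insert.mp hj with rfl | hj
    · exact (hx.symm ▸ rfl : j ∈ rowSupp A t ∩ supp v).1
    · rw [Finset.mem_singleton.mp hj]
      exact (hy.symm ▸ rfl : y ∈ rowSupp A t ∩ supp v').1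
  · by_contra hu0
    rcases hu.1 j hu0 with hjv | hjv'
    · exact hj (Finset.mem_insert.mpr (Or.inl (hx.subset ⟨htj, hjv⟩)))
    · exact hj (Finset.mem_insert_of_mem (Finset.mem_singleton.mpr (hy.subset ⟨htj, hjv'⟩)))

theorem JointlyTight.adj (hA : IsBinaryMatrix A) (hu : JointlyTight A v v' u) {x y : Fin n}
    (h : (JSG A v v').Adj x y) :
    u x + u y = 1 ∧ (x ∈ supp v \ supp v' ↔ y ∉ supp v \ supp v') := by
  obtain ⟨hxy, hedge | hedge⟩ := h
  · have ⟨hx, hy⟩ := hedge.mem_diff hxy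
    exact ⟨hu.add_eq_one_of_jsgEdge hA hxy hedge, iff_of_true hx fun h => hy.2 h.1⟩
  · have ⟨hy, hx⟩ := hedge.mem_diff hxy.symm
    exact ⟨add_comm (u x) (u y) ▸ hu.add_eq_one_of_jsgEdge hA hxy.symm hedge,
      iff_of_false (fun h => hx.2 h.1) fun h => h hy⟩

theorem JointlyTight.eq_zero_or_one_le (hA : IsBinaryMatrix A) (hu : u ∈ coverPoints A)
    (hjt : JointlyTight A v v' u)
    (hpc : ∀ p ∈ supp v \ supp v', ∀ q ∈ supp v \ supp v', (JSG A v v').Reachable p q) :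
    (∀ p ∈ supp v \ supp v', u p = 0) ∨ ∀ p ∈ supp v \ supp v', 1 ≤ u p := by
  by_cases h : ∃ q ∈ supp v \ supp v', u q ≠ 0
  · obtain ⟨q, hq, huq⟩ := h
    exact Or.inr fun p hp => (hpc q hq p hp).one_le_of_add_eq_one
      (nonneg_of_mem_coverPoints hu) (fun x y => hjt.adj hA) hq
      (one_le_of_mem_coverPoints hu huq) hp
  · push Not at h
    exact Or.inl h

theorem JointlyTight.one_le_of_eq_zero (hA : IsBinaryMatrix A) (hu : u ∈ coverPoints A)
    (hjt : JointlyTight A v v' u) (hv' : IsVertex (Qstar A) v')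
    (h0 : ∀ p ∈ supp v \ supp v', u p = 0) {j : Fin n} (hj : j ∈ supp v') : 1 ≤ u j := by
  obtain ⟨t, ht⟩ := hv'.exists_rowSupp_inter_supp_eq_singleton hA hj
  have hS : ∀ l, u l ≠ 0 → l ∈ supp v' := fun l hl =>
    (hjt.1 l hl).elim (fun hlv => by_contra fun hlv' => hl (h0 l ⟨hlv, hlv'⟩)) id
  rw [← rowSum_eq_of_rowSupp_inter_eq_singleton hA hS ht]
  exact hu.2 t

theorem JointlyTight.one_le_add (hA : IsBinaryMatrix A) (hu : u ∈ coverPoints A)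
    (hjt : JointlyTight A v v' u) (hv' : IsVertex (Qstar A) v')
    (hpc : ∀ p ∈ supp v \ supp v', ∀ q ∈ supp v \ supp v', (JSG A v v').Reachable p q)
    {p q : Fin n} (hp : p ∈ supp v \ supp v') (hq : q ∈ supp v' \ supp v) : 1 ≤ u p + u q := by
  have := nonneg_of_mem_coverPoints hu
  rcases hjt.eq_zero_or_one_le hA hu hpc with h0 | h1
  · linarith [hjt.one_le_of_eq_zero hA hu hv' h0 hq.1, this p]
  · linarith [h1 p hp, this q]

theorem JointlyTight.eqOn_or_eqOn (hA : IsBinaryMatrix A) (hu : u ∈ coverPoints A)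
    (hjt : JointlyTight A v v' u) (hv : IsBinaryVec v) (hv' : IsBinaryVec v')
    (hpc : ∀ p ∈ supp v \ supp v', ∀ q ∈ supp v \ supp v', (JSG A v v').Reachable p q)
    {p₀ q₀ : Fin n} (hp₀ : p₀ ∈ supp v \ supp v') (hq₀ : q₀ ∈ supp v' \ supp v)
    (hsum : ∀ p ∈ supp v \ supp v', ∀ q ∈ supp v' \ supp v, u p + u q = 1) :
    (∀ j ∈ jsgNodes v v', u j = v j) ∨ ∀ j ∈ jsgNodes v v', u j = v' j := by
  have hnn := nonneg_of_mem_coverPoints hu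
  rcases hjt.eq_zero_or_one_le hA hu hpc with h0 | h1
  · refine Or.inr fun j hj => hj.elim (fun hj => ?_) fun hj => ?_
    · rw [h0 j hj, not_not.mp hj.2]
    · linarith [hsum p₀ hp₀ j hj, h0 p₀ hp₀, hv'.eq_one hj.1]
  · refine Or.inl fun j hj => hj.elim (fun hj => ?_) fun hj => ?_
    · linarith [hsum j hj q₀ hq₀, h1 j hj, hnn q₀, hv.eq_one hj.1]
    · linarith [hsum p₀ hp₀ j hj, h1 p₀ hp₀, hnn j, not_not.mp hj.2]

theorem JointlyTight.one_le_of_eqOn (hA : IsBinaryMatrix A) (hu : u ∈ coverPoints A)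
    (hjt : JointlyTight A v v' u) (hv : IsVertex (Qstar A) v)
    (h : ∀ j ∈ jsgNodes v v', u j = v j) {j : Fin n} (hj : j ∈ supp v) : 1 ≤ u j :=
  hjt.symm.one_le_of_eq_zero hA hu hv (fun q hq => (h q (Or.inr hq)).trans (not_not.mp hq.2)) hj

end JointSaturation

section Adjacency

variable {m n : ℕ} {A : Matrix (Fin m) (Fin n) ℝ} {v v' : Fin n → ℝ}

theorem eq_of_eqOn_jsgNodes (hv : IsBinaryVec v) {u : Fin n → ℝ}
    (hS : ∀ j, u j ≠ 0 → j ∈ supp v ∪ supp v') (hI : ∀ j ∈ supp v ∩ supp v', u j = 1)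
    (h : ∀ j ∈ jsgNodes v v', u j = v j) : u = v := by
  funext j
  by_cases hj : j ∈ jsgNodes v v'
  · exact h j hj
  simp only [jsgNodes, supp, Set.mem_union, Set.mem_sdiff, Set.mem_ofPred_eq] at hj hS hI
  by_cases hvj : v j = 0
  · have hv'j : v' j = 0 := by by_contra h'; exact hj (Or.inr ⟨h', not_not.mpr hvj⟩)
    rw [hvj]
    by_contra hu
    exact (hS j hu).elim (· hvj) (· hv'j)
  · have hv'j : v' j ≠ 0 := fun h' => hj (Or.inl ⟨hvj, not_not.mpr h'⟩)
    rw [hI j ⟨hvj, hv'j⟩, hv.eq_one hvj]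

theorem jointlyTight_of_sum_eq (hA : IsBinaryMatrix A) (hv : IsBinaryVec v)
    (hv' : IsBinaryVec v') {t : Finset (Fin n → ℝ)} {w : (Fin n → ℝ) → ℝ} {c₁ c₂ : ℝ}
    (ht : ↑t ⊆ coverPoints A) (hw : ∀ y ∈ t, 0 < w y) (hw1 : ∑ y ∈ t, w y = 1)
    (hc : c₁ + c₂ = 1) (hz : ∀ j, ∑ y ∈ t, w y * y j = c₁ * v j + c₂ * v' j) :
    ∀ y ∈ t, JointlyTight A v v' y := by
  intro y hy
  refine ⟨fun j hyj => by_contra fun hj => hyj ?_, fun r a b ha hb => ?_⟩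
  · simp only [Set.mem_union, supp, Set.mem_ofPred_eq, not_or, not_not] at hj
    refine eq_of_forall_le_of_sum_mul_le hw hw1
      (fun y hy => nonneg_of_mem_coverPoints (ht hy) j) ?_ y hy
    rw [hz, hj.1, hj.2]
    simp
  · refine eq_of_forall_le_of_sum_mul_le hw hw1 (fun y hy => (ht hy).2 r) (le_of_eq ?_) y hy
    calc ∑ y ∈ t, w y * ∑ j, A r j * y j = ∑ j, A r j * ∑ y ∈ t, w y * y j := by
          simp only [Finset.mul_sum]
          rw [Finset.sum_comm]
          simp only [mul_left_comm]
      _ = c₁ * ∑ j, A r j * v j + c₂ * ∑ j, A r j * v' j := by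
          simp only [hz, mul_add, Finset.sum_add_distrib, Finset.mul_sum, mul_left_comm]
      _ = 1 := by rw [hv.rowSum_eq_one hA ha, hv'.rowSum_eq_one hA hb, mul_one, mul_one, hc]

theorem eq_or_eq_of_sum_eq (hA : IsBinaryMatrix A) (hne : v ≠ v')
    (hv : IsVertex (Qstar A) v) (hv' : IsVertex (Qstar A) v')
    (hpc : ∀ p ∈ supp v \ supp v', ∀ q ∈ supp v \ supp v', (JSG A v v').Reachable p q)
    {t : Finset (Fin n → ℝ)} {w : (Fin n → ℝ) → ℝ} {c₁ c₂ : ℝ}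
    (ht : ↑t ⊆ coverPoints A) (hw : ∀ y ∈ t, 0 < w y) (hw1 : ∑ y ∈ t, w y = 1)
    (hc : c₁ + c₂ = 1) (hz : ∀ j, ∑ y ∈ t, w y * y j = c₁ * v j + c₂ * v' j) :
    ∀ y ∈ t, y = v ∨ y = v' := by
  have hbv := hv.isBinaryVec hA
  have hbv' := hv'.isBinaryVec hA
  obtain ⟨p₀, hp₀⟩ := Set.not_subset.mp (hv.not_supp_subset hA hv' hne)
  obtain ⟨q₀, hq₀⟩ := Set.not_subset.mp (hv'.not_supp_subset hA hv hne.symm)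
  have hjt := jointlyTight_of_sum_eq hA hbv hbv' ht hw hw1 hc hz
  have hsum : ∀ y ∈ t, ∀ p ∈ supp v \ supp v', ∀ q ∈ supp v' \ supp v, y p + y q = 1 := by
    intro y hy p hp q hq
    refine eq_of_forall_le_of_sum_mul_le hw hw1
      (fun y hy => (hjt y hy).one_le_add hA (ht hy) hv' hpc hp hq) (le_of_eq ?_) y hy
    simp only [mul_add, Finset.sum_add_distrib, hz, hbv.eq_one hp.1, hbv'.eq_one hq.1,
      not_not.mp hp.2, not_not.mp hq.2]
    linarith
  have heqOn : ∀ y ∈ t,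
      (∀ j ∈ jsgNodes v v', y j = v j) ∨ ∀ j ∈ jsgNodes v v', y j = v' j := fun y hy =>
    (hjt y hy).eqOn_or_eqOn hA (ht hy) hbv hbv' hpc hp₀ hq₀ (hsum y hy)
  have hI : ∀ y ∈ t, ∀ j ∈ supp v ∩ supp v', y j = 1 := by
    intro y hy j hj
    refine eq_of_forall_le_of_sum_mul_le (f := fun y => y j) hw hw1 (fun y hy => ?_) ?_ y hy
    · rcases heqOn y hy with h | h
      · exact (hjt y hy).one_le_of_eqOn hA (ht hy) hv h hj.1
      · exact (hjt y hy).symm.one_le_of_eqOn hA (ht hy) hv' (jsgNodes_comm v v' ▸ h) hj.2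
    · rw [hz, hbv.eq_one hj.1, hbv'.eq_one hj.2]
      linarith
  intro y hy
  rcases heqOn y hy with h | h
  · exact Or.inl (eq_of_eqOn_jsgNodes hbv (hjt y hy).1 (hI y hy) h)
  · refine Or.inr (eq_of_eqOn_jsgNodes hbv' (hjt y hy).symm.1 (fun j hj => ?_)
      (jsgNodes_comm v v' ▸ h))
    exact hI y hy j hj.symm

theorem isExtreme_segment_of_reachable (hA : IsBinaryMatrix A) (hne : v ≠ v')
    (hv : IsVertex (Qstar A) v) (hv' : IsVertex (Qstar A) v')
    (hpc : ∀ p ∈ supp v \ supp v', ∀ q ∈ supp v \ supp v', (JSG A v v').Reachable p q) :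
    IsExtreme ℝ (Qstar A) (segment ℝ v v') := by
  rw [← convexHull_pair]
  refine isExtreme_convexHull_of_forall_sum_mem
    (Set.pair_subset hv.mem_coverPoints hv'.mem_coverPoints) fun t w ht hw hw1 hz y hy => ?_
  rw [convexHull_pair] at hz
  obtain ⟨c₁, c₂, -, -, hc, hzc⟩ := hz
  refine eq_or_eq_of_sum_eq hA hne hv hv' hpc ht hw hw1 hc (fun j => ?_) y hy
  simpa [Finset.sum_apply] using (congrFun hzc j).symm

end Adjacency

theorem stmt3_general {m n : ℕ} (A : Matrix (Fin m) (Fin n) ℝ) (hA : IsBinaryMatrix A)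
    (v v' : Fin n → ℝ) (hne : v ≠ v')
    (hv : IsVertex (Qstar A) v) (hv' : IsVertex (Qstar A) v')
    (hpc : JSGPartiteConnected A v v') :
    AdjacentVerts (Qstar A) v v' := by
  refine ⟨hne, hv, hv', ?_⟩
  rcases hpc with hpc | hpc
  · exact isExtreme_segment_of_reachable hA hne hv hv' hpc
  · rw [segment_symm]
    exact isExtreme_segment_of_reachable hA hne.symm hv' hv (JSG_comm A v v' ▸ hpc)

/-- if the joint saturation graph is partite-connected, then the vertices
are adjacent in `Q*(A)`. -/
theorem stmt3 {m n : ℕ} (A : Matrix (Fin m) (Fin n) ℝ) (hA : IsBinaryMatrix A)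
    (hnd : ∀ s t : Fin m, s ≠ t → ¬ rowSupp A s ⊆ rowSupp A t)
    (v v' : Fin n → ℝ) (hne : v ≠ v')
    (hv : IsVertex (Qstar A) v) (hv' : IsVertex (Qstar A) v')
    (hpc : JSGPartiteConnected A v v') :
    AdjacentVerts (Qstar A) v v' :=
  stmt3_general A hA v v' hne hv hv' hpc
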